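/- arXiv:1612.05215 — 7 statements merged into one kernel-verified Lean document; each statement's English description precedes it below -/
import Mathlib

section
/- Let H = [[A, X],[X†, B]] be Hermitian with A positive definite. Then the Schur complement H/A = B − X† A⁻¹ X is the supremum, in the Löwner order, of the set of Hermitian matrices B̃ such that H − 0⊕B̃ is positive definite; i.e., H/A is an upper bound of this set, and it is the least such upper bound. -/
open Matrix
open scoped ComplexOrder

/-!
Write `S = B - Xᴴ A⁻¹ X`. Since `H - 0 ⊕ B̃ = [[A, X], [Xᴴ, B - B̃]]` has Schur complement
`S - B̃`, the Schur complement criterion gives the upper bound. Conversely `B̃ = S - ε` is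
admissible for every `ε > 0`, as the block matrix then has Schur complement `ε > 0`; so an upper
bound `C` satisfies `C ≥ S - ε` for all `ε > 0`, and `C ≥ S` in the limit `ε → 0`.
-/

namespace Matrix

variable {l m n o 𝕜 : Type*}

theorem fromBlocks_sub {α : Type*} [Sub α] (A : Matrix n l α) (B : Matrix n m α)
    (C : Matrix o l α) (D : Matrix o m α) (A' : Matrix n l α) (B' : Matrix n m α)
    (C' : Matrix o l α) (D' : Matrix o m α) :
    fromBlocks A B C D - fromBlocks A' B' C' D' =
      fromBlocks (A - A') (B - B') (C - C') (D - D') := by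
  ext (i | i) (j | j) <;> rfl

variable [Fintype m] [Fintype n] [DecidableEq m] [RCLike 𝕜]

theorem PosDef.fromBlocks₁₁_of_posDef_schur {A : Matrix m m 𝕜} (B : Matrix m n 𝕜)
    {D : Matrix n n 𝕜} (hA : A.PosDef) (hS : (D - Bᴴ * A⁻¹ * B).PosDef) :
    (fromBlocks A B Bᴴ D).PosDef := by
  have := hA.isUnit.invertible
  refine .of_dotProduct_mulVec_pos ?_ fun x hx ↦ ?_
  · rw [IsHermitian.fromBlocks₁₁ _ _ hA.1]
    exact hS.1
  rw [dotProduct_mulVec, ← Sum.elim_comp_inl_inr x, schur_complement_eq₁₁ B D _ _ hA.1,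
    ← dotProduct_mulVec, ← dotProduct_mulVec]
  by_cases hx₂ : x ∘ Sum.inr = 0
  · have hx₁ : x ∘ Sum.inl ≠ 0 := fun hx₁ ↦ hx (Sum.elim_comp_inl_inr x ▸ by simp [hx₁, hx₂])
    simpa [hx₂] using hA.dotProduct_mulVec_pos hx₁
  · exact add_pos_of_nonneg_of_pos (hA.posSemidef.dotProduct_mulVec_nonneg _)
      (hS.dotProduct_mulVec_pos hx₂)

theorem PosSemidef.of_forall_add_smul_one [DecidableEq n] {M : Matrix n n 𝕜}
    (h : ∀ ε : ℝ, 0 < ε → (M + ε • (1 : Matrix n n 𝕜)).PosSemidef) : M.PosSemidef := by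
  refine .of_dotProduct_mulVec_nonneg (by simpa using (h 1 one_pos).1.sub isHermitian_one)
    fun x ↦ ?_
  have hquad (ε : ℝ) : star x ⬝ᵥ ((M + ε • (1 : Matrix n n 𝕜)) *ᵥ x) =
      star x ⬝ᵥ (M *ᵥ x) + ε • (star x ⬝ᵥ x) := by
    simp [add_mulVec, smul_mulVec, dotProduct_add, dotProduct_smul]
  have hlim : Filter.Tendsto (fun ε : ℝ ↦ star x ⬝ᵥ (M *ᵥ x) + ε • (star x ⬝ᵥ x))
      (nhdsWithin 0 (Set.Ioi 0)) (nhds (star x ⬝ᵥ (M *ᵥ x))) :=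
    tendsto_nhdsWithin_of_tendsto_nhds <|
      (continuous_const.add (continuous_id.smul continuous_const)).tendsto' 0 _ (by simp)
  refine ge_of_tendsto hlim (eventually_nhdsWithin_of_forall fun ε hε ↦ ?_)
  rw [← hquad]
  exact (h ε hε).dotProduct_mulVec_nonneg x

end Matrix

/-- Variational characterisation of the Schur complement: for `H = [[A, X],[Xᴴ, B]]` Hermitian
with `A > 0`, the Schur complement `B - Xᴴ A⁻¹ X` is the supremum in the Löwner order of the
Hermitian matrices `B̃` with `H - 0 ⊕ B̃ > 0`. -/
theorem schur_complement_variational (m n : ℕ)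
    (A : Matrix (Fin m) (Fin m) ℂ) (B : Matrix (Fin n) (Fin n) ℂ)
    (X : Matrix (Fin m) (Fin n) ℂ)
    (hA : A.PosDef)
    (hH : (Matrix.fromBlocks A X Xᴴ B).IsHermitian) :
    (∀ Bt : Matrix (Fin n) (Fin n) ℂ, Bt.IsHermitian →
        (Matrix.fromBlocks A X Xᴴ B - Matrix.fromBlocks 0 0 0 Bt).PosDef →
        ((B - Xᴴ * A⁻¹ * X) - Bt).PosSemidef) ∧
      (∀ C : Matrix (Fin n) (Fin n) ℂ, C.IsHermitian →
        (∀ Bt : Matrix (Fin n) (Fin n) ℂ, Bt.IsHermitian →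
          (Matrix.fromBlocks A X Xᴴ B - Matrix.fromBlocks 0 0 0 Bt).PosDef →
          (C - Bt).PosSemidef) →
        (C - (B - Xᴴ * A⁻¹ * X)).PosSemidef) := by
  have := hA.isUnit.invertible
  have hS : (B - Xᴴ * A⁻¹ * X).IsHermitian :=
    (isHermitian_fromBlocks_iff.mp hH).2.2.2.sub (isHermitian_conjTranspose_mul_mul X hA.1.inv)
  simp only [fromBlocks_sub, sub_zero]
  refine ⟨fun Bt _ hpos ↦ ?_, fun C _ hC ↦ .of_forall_add_smul_one fun ε hε ↦ ?_⟩
  · simpa only [sub_right_comm] using (PosDef.fromBlocks₁₁ X (B - Bt) hA).mp hpos.posSemidef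
  · have hε₁ : (ε • (1 : Matrix (Fin n) (Fin n) ℂ)).PosDef := PosDef.one.smul hε
    have hschur : B - (B - Xᴴ * A⁻¹ * X - ε • 1) - Xᴴ * A⁻¹ * X = ε • 1 := by abel
    have hgap := hC _ (hS.sub hε₁.1) (PosDef.fromBlocks₁₁_of_posDef_schur X hA (by rwa [hschur]))
    rwa [sub_sub_eq_add_sub, add_sub_right_comm] at hgap
end

section
/- The Schur complement is monotone: if H₁ ≥ H₂ are Hermitian block matrices (with blocks indexed the same way) whose top-left blocks A₁, A₂ are positive definite, then H₁/A₁ ≥ H₂/A₂. -/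
/-!
For `H = fromBlocks A B Bᴴ D` with `A > 0`, completing the square gives
`(x, y)ᴴ H (x, y) = (x + A⁻¹ B y)ᴴ A (x + A⁻¹ B y) + yᴴ (H/A) y`, so `yᴴ (H/A) y` is the minimum
of the quadratic form of `H` over `x`, attained at `v = (-A⁻¹ B y, y)`. Taking the minimiser `v`
of `H₁`, we get `yᴴ (H₁/A₁) y = vᴴ H₁ v ≥ vᴴ H₂ v ≥ yᴴ (H₂/A₂) y`.
-/

open Matrix
open scoped ComplexOrder

namespace Matrix

section SchurComplement

variable {m n R : Type*} [Fintype m] [DecidableEq m] [CommRing R] [StarRing R]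

noncomputable def schurCompl (A : Matrix m m R) (B : Matrix m n R) (D : Matrix n n R) :
    Matrix n n R :=
  D - Bᴴ * A⁻¹ * B

lemma IsHermitian.schurCompl_sub_schurCompl {A₁ A₂ : Matrix m m R} {B₁ B₂ : Matrix m n R}
    {D₁ D₂ : Matrix n n R} (hA₁ : A₁.IsHermitian) (hA₂ : A₂.IsHermitian)
    (h : (Matrix.fromBlocks A₁ B₁ B₁ᴴ D₁ - Matrix.fromBlocks A₂ B₂ B₂ᴴ D₂).IsHermitian) :
    (schurCompl A₁ B₁ D₁ - schurCompl A₂ B₂ D₂).IsHermitian := by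
  have hD : (D₁ - D₂).IsHermitian :=
    IsHermitian.ext fun i j => by simpa using h.apply (Sum.inr i) (Sum.inr j)
  rw [schurCompl, schurCompl, sub_sub_sub_comm]
  exact hD.sub ((isHermitian_conjTranspose_mul_mul _ hA₁.inv).sub
    (isHermitian_conjTranspose_mul_mul _ hA₂.inv))

variable [Fintype n]

lemma dotProduct_fromBlocks_mulVec_eq_schurCompl {A : Matrix m m R} [Invertible A]
    (hA : A.IsHermitian) (B : Matrix m n R) (D : Matrix n n R) (y : n → R) :
    star (-((A⁻¹ * B) *ᵥ y) ⊕ᵥ y) ⬝ᵥ (fromBlocks A B Bᴴ D *ᵥ (-((A⁻¹ * B) *ᵥ y) ⊕ᵥ y)) =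
      star y ⬝ᵥ (schurCompl A B D *ᵥ y) := by
  rw [dotProduct_mulVec, schur_complement_eq₁₁ B D _ _ hA, neg_add_cancel, star_zero,
    zero_vecMul, zero_dotProduct, zero_add, ← dotProduct_mulVec, schurCompl]

variable [PartialOrder R] [StarOrderedRing R]

lemma dotProduct_schurCompl_mulVec_le {A : Matrix m m R} [Invertible A]
    (hA : A.PosSemidef) (B : Matrix m n R) (D : Matrix n n R) (x : m → R) (y : n → R) :
    star y ⬝ᵥ (schurCompl A B D *ᵥ y) ≤ star (x ⊕ᵥ y) ⬝ᵥ (fromBlocks A B Bᴴ D *ᵥ (x ⊕ᵥ y)) := by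
  rw [dotProduct_mulVec (star (x ⊕ᵥ y)), schur_complement_eq₁₁ B D _ _ hA.1,
    ← dotProduct_mulVec, ← dotProduct_mulVec, schurCompl]
  exact le_add_of_nonneg_left (hA.dotProduct_mulVec_nonneg _)

theorem PosSemidef.schurCompl_sub_schurCompl {A₁ A₂ : Matrix m m R} [Invertible A₁]
    [Invertible A₂] {B₁ B₂ : Matrix m n R} {D₁ D₂ : Matrix n n R}
    (hA₁ : A₁.IsHermitian) (hA₂ : A₂.PosSemidef)
    (h : (fromBlocks A₁ B₁ B₁ᴴ D₁ - fromBlocks A₂ B₂ B₂ᴴ D₂).PosSemidef) :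
    (schurCompl A₁ B₁ D₁ - schurCompl A₂ B₂ D₂).PosSemidef := by
  refine .of_dotProduct_mulVec_nonneg (IsHermitian.schurCompl_sub_schurCompl hA₁ hA₂.1 h.1)
    fun y => ?_
  have hv := h.dotProduct_mulVec_nonneg (-((A₁⁻¹ * B₁) *ᵥ y) ⊕ᵥ y)
  rw [sub_mulVec, dotProduct_sub, dotProduct_fromBlocks_mulVec_eq_schurCompl hA₁,
    sub_nonneg] at hv
  rw [sub_mulVec, dotProduct_sub, sub_nonneg]
  exact (dotProduct_schurCompl_mulVec_le hA₂ B₂ D₂ _ y).trans hv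

end SchurComplement

end Matrix

theorem schur_complement_monotone_general (m n : ℕ)
    (A₁ A₂ : Matrix (Fin m) (Fin m) ℂ) (B₁ B₂ : Matrix (Fin n) (Fin n) ℂ)
    (X₁ X₂ : Matrix (Fin m) (Fin n) ℂ)
    (hA₁ : A₁.PosDef) (hA₂ : A₂.PosDef)
    (hle : (Matrix.fromBlocks A₁ X₁ X₁ᴴ B₁ - Matrix.fromBlocks A₂ X₂ X₂ᴴ B₂).PosSemidef) :
    ((B₁ - X₁ᴴ * A₁⁻¹ * X₁) - (B₂ - X₂ᴴ * A₂⁻¹ * X₂)).PosSemidef := by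
  have := hA₁.isUnit.invertible
  have := hA₂.isUnit.invertible
  exact PosSemidef.schurCompl_sub_schurCompl hA₁.1 hA₂.posSemidef hle

/-- Monotonicity of the Schur complement: if `H₁ ≥ H₂` (Hermitian block matrices with positive
definite top-left blocks `A₁, A₂`), then `H₁/A₁ ≥ H₂/A₂`. -/
theorem schur_complement_monotone (m n : ℕ)
    (A₁ A₂ : Matrix (Fin m) (Fin m) ℂ) (B₁ B₂ : Matrix (Fin n) (Fin n) ℂ)
    (X₁ X₂ : Matrix (Fin m) (Fin n) ℂ)
    (hA₁ : A₁.PosDef) (hA₂ : A₂.PosDef)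
    (hH₁ : (Matrix.fromBlocks A₁ X₁ X₁ᴴ B₁).IsHermitian)
    (hH₂ : (Matrix.fromBlocks A₂ X₂ X₂ᴴ B₂).IsHermitian)
    (hle : (Matrix.fromBlocks A₁ X₁ X₁ᴴ B₁ - Matrix.fromBlocks A₂ X₂ X₂ᴴ B₂).PosSemidef) :
    ((B₁ - X₁ᴴ * A₁⁻¹ * X₁) - (B₂ - X₂ᴴ * A₂⁻¹ * X₂)).PosSemidef :=
  schur_complement_monotone_general m n A₁ A₂ B₁ B₂ X₁ X₂ hA₁ hA₂ hle
end

section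
/- The harmonic mean of positive definite matrices is jointly concave: for positive definite A₁, A₂, B₁, B₂ and t ∈ [0,1], (tA₁ + (1−t)A₂) ! (tB₁ + (1−t)B₂) ≥ t(A₁!B₁) + (1−t)(A₂!B₂) in the Löwner order. -/
/-!
Completing the square with `S = A + B` gives, for every matrix `C`,
`Cᴴ A C + (1 - C)ᴴ B (1 - C) = (C - S⁻¹B)ᴴ S (C - S⁻¹B) + (A⁻¹ + B⁻¹)⁻¹`,
so `A ! B / 2` is the Löwner minimum over `C` of a quadratic form that is linear in `(A, B)`.
A minimum of linear functions is concave: evaluate the forms of `(A₁, B₁)` and `(A₂, B₂)`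
at the minimiser for the averaged pair.
-/

open Matrix
open scoped ComplexOrder

/-- The harmonic mean `A ! B = 2 (A⁻¹ + B⁻¹)⁻¹`. -/
noncomputable def harmMean {n : ℕ} (A B : Matrix (Fin n) (Fin n) ℂ) :
    Matrix (Fin n) (Fin n) ℂ :=
  (2 : ℂ) • (A⁻¹ + B⁻¹)⁻¹

namespace Matrix

variable {m 𝕜 : Type*} [RCLike 𝕜]

theorem PosDef.smul_add_smul {M N : Matrix m m 𝕜} (hM : M.PosDef) (hN : N.PosDef)
    {a b : 𝕜} (ha : 0 ≤ a) (hb : 0 ≤ b) (hab : a + b = 1) : (a • M + b • N).PosDef := by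
  rcases ha.lt_or_eq with ha | rfl
  · exact (hM.smul ha).add_posSemidef (hN.posSemidef.smul hb)
  · rw [zero_add] at hab
    simpa [hab] using hN

variable [Fintype m] [DecidableEq m]

/-- The parallel sum of Anderson and Duffin. -/
noncomputable def parallelSum (A B : Matrix m m 𝕜) : Matrix m m 𝕜 := (A⁻¹ + B⁻¹)⁻¹

noncomputable def parallelSumForm (C A B : Matrix m m 𝕜) : Matrix m m 𝕜 :=
  Cᴴ * A * C + (1 - C)ᴴ * B * (1 - C)

theorem parallelSum_eq_sub {A B : Matrix m m 𝕜} (hA : IsUnit A) (hB : IsUnit B)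
    (hAB : IsUnit (A + B)) : parallelSum A B = B - B * (A + B)⁻¹ * B := by
  have hAdet := (isUnit_iff_isUnit_det A).mp hA
  have hBdet := (isUnit_iff_isUnit_det B).mp hB
  calc parallelSum A B = B * (A + B)⁻¹ * A := by
        rw [parallelSum, inv_add_inv (by simp [hA, hB]), Matrix.mul_inv_rev, Matrix.mul_inv_rev,
          nonsing_inv_nonsing_inv _ hAdet, nonsing_inv_nonsing_inv _ hBdet, Matrix.mul_assoc]
    _ = B * ((A + B)⁻¹ * (A + B)) - B * (A + B)⁻¹ * B := by noncomm_ring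
    _ = B - B * (A + B)⁻¹ * B := by
        rw [nonsing_inv_mul _ ((isUnit_iff_isUnit_det _).mp hAB), Matrix.mul_one]

theorem parallelSumForm_eq {A B : Matrix m m 𝕜} (hA : A.PosDef) (hB : B.PosDef)
    (C : Matrix m m 𝕜) :
    parallelSumForm C A B = (C - (A + B)⁻¹ * B)ᴴ * (A + B) * (C - (A + B)⁻¹ * B)
      + parallelSum A B := by
  have hAB := (hA.add hB).isUnit
  have hABdet := (isUnit_iff_isUnit_det _).mp hAB
  calc parallelSumForm C A B = Cᴴ * (A + B) * C - Cᴴ * B - B * C + B := by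
        rw [parallelSumForm, conjTranspose_sub, conjTranspose_one]; noncomm_ring
    _ = Cᴴ * (A + B) * C - Cᴴ * ((A + B) * (A + B)⁻¹) * B - B * ((A + B)⁻¹ * (A + B)) * C
          + B * ((A + B)⁻¹ * ((A + B) * (A + B)⁻¹)) * B + (B - B * (A + B)⁻¹ * B) := by
        rw [mul_nonsing_inv _ hABdet, nonsing_inv_mul _ hABdet]; noncomm_ring
    _ = _ := by
        rw [parallelSum_eq_sub hA.isUnit hB.isUnit hAB, conjTranspose_sub, conjTranspose_mul,
          (hA.add hB).isHermitian.inv.eq, hB.isHermitian.eq]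
        noncomm_ring

theorem parallelSum_le_parallelSumForm {A B : Matrix m m 𝕜} (hA : A.PosDef) (hB : B.PosDef)
    (C : Matrix m m 𝕜) : (parallelSumForm C A B - parallelSum A B).PosSemidef := by
  rw [parallelSumForm_eq hA hB, add_sub_cancel_right]
  exact (hA.add hB).posSemidef.conjTranspose_mul_mul_same _

theorem parallelSumForm_inv_add_mul {A B : Matrix m m 𝕜} (hA : A.PosDef) (hB : B.PosDef) :
    parallelSumForm ((A + B)⁻¹ * B) A B = parallelSum A B := by
  simp [parallelSumForm_eq hA hB]

theorem parallelSumForm_smul_add_smul (C A₁ A₂ B₁ B₂ : Matrix m m 𝕜) (a b : 𝕜) :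
    parallelSumForm C (a • A₁ + b • A₂) (a • B₁ + b • B₂)
      = a • parallelSumForm C A₁ B₁ + b • parallelSumForm C A₂ B₂ := by
  simp only [parallelSumForm, Matrix.mul_add, Matrix.add_mul, Matrix.mul_smul, Matrix.smul_mul,
    smul_add]
  abel

theorem parallelSum_jointly_concave {A₁ A₂ B₁ B₂ : Matrix m m 𝕜}
    (hA₁ : A₁.PosDef) (hA₂ : A₂.PosDef) (hB₁ : B₁.PosDef) (hB₂ : B₂.PosDef)
    {a b : 𝕜} (ha : 0 ≤ a) (hb : 0 ≤ b) (hab : a + b = 1) :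
    (parallelSum (a • A₁ + b • A₂) (a • B₁ + b • B₂)
      - (a • parallelSum A₁ B₁ + b • parallelSum A₂ B₂)).PosSemidef := by
  rw [← parallelSumForm_inv_add_mul (hA₁.smul_add_smul hA₂ ha hb hab)
      (hB₁.smul_add_smul hB₂ ha hb hab), parallelSumForm_smul_add_smul, add_sub_add_comm,
    ← smul_sub, ← smul_sub]
  exact ((parallelSum_le_parallelSumForm hA₁ hB₁ _).smul ha).add
    ((parallelSum_le_parallelSumForm hA₂ hB₂ _).smul hb)

end Matrix

theorem harmMean_eq_two_smul_parallelSum {n : ℕ} (A B : Matrix (Fin n) (Fin n) ℂ) :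
    harmMean A B = (2 : ℂ) • parallelSum A B := rfl

/-- The harmonic mean of positive definite matrices is jointly concave. -/
theorem harmonic_mean_jointly_concave (n : ℕ)
    (A₁ A₂ B₁ B₂ : Matrix (Fin n) (Fin n) ℂ)
    (hA₁ : A₁.PosDef) (hA₂ : A₂.PosDef) (hB₁ : B₁.PosDef) (hB₂ : B₂.PosDef)
    (t : ℝ) (ht0 : 0 ≤ t) (ht1 : t ≤ 1) :
    (harmMean ((t : ℂ) • A₁ + ((1 - t : ℝ) : ℂ) • A₂)
        ((t : ℂ) • B₁ + ((1 - t : ℝ) : ℂ) • B₂)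
      - ((t : ℂ) • harmMean A₁ B₁ + ((1 - t : ℝ) : ℂ) • harmMean A₂ B₂)).PosSemidef := by
  have ht : (0 : ℂ) ≤ t := by exact_mod_cast ht0
  have hs : (0 : ℂ) ≤ ((1 - t : ℝ) : ℂ) := by exact_mod_cast sub_nonneg.mpr ht1
  have hts : (t : ℂ) + ((1 - t : ℝ) : ℂ) = 1 := by push_cast; ring
  have hconcave := (parallelSum_jointly_concave hA₁ hA₂ hB₁ hB₂ ht hs hts).smul
    (show (0 : ℂ) ≤ 2 by norm_num)
  rw [smul_sub, smul_add, smul_comm (2 : ℂ) (t : ℂ), smul_comm (2 : ℂ) ((1 - t : ℝ) : ℂ)]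
    at hconcave
  simpa only [harmMean_eq_two_smul_parallelSum] using hconcave
end

section
/- For positive definite matrices A, B, the geometric mean A#B := A^{1/2}(A^{-1/2} B A^{-1/2})^{1/2} A^{1/2} satisfies A ≥ (A#B) B⁻¹ (A#B), and moreover A#B is the maximum, in the Löwner order, among Hermitian X satisfying A ≥ X B⁻¹ X. -/
/-!
Write `A = S²` with `S = A^{1/2}` and `B = S T² S` with `T = (S⁻¹ B S⁻¹)^{1/2}`, so that
`A # B = S T S` and `(S T S) B⁻¹ (S T S) = S² = A`. For maximality, the two Schur complements of
the block matrix `[[A, X], [X, B]]` show that `X B⁻¹ X ≤ A` is equivalent to `X A⁻¹ X ≤ B`.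
Congruence by `S⁻¹` turns the latter into `Y² ≤ T²` for `Y = S⁻¹ X S⁻¹`, and operator monotonicity
of the square root gives `Y ≤ |Y| ≤ T`, that is `X ≤ S T S`.
-/

open Matrix
open scoped ComplexOrder

/-- Total matrix square root: the PSD square root on PSD matrices, `0` elsewhere. -/
noncomputable def msqrt {𝕜 : Type*} [RCLike 𝕜] {n : Type*} [Fintype n] [DecidableEq n]
    (A : Matrix n n 𝕜) : Matrix n n 𝕜 :=
  letI := Classical.dec A.PosSemidef
  if h : A.PosSemidef then
    h.1.eigenvectorUnitary.1 * diagonal ((↑) ∘ (√·) ∘ h.1.eigenvalues) *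
      (star h.1.eigenvectorUnitary : Matrix n n 𝕜) else 0

/-- The matrix geometric mean `A # B = A^{1/2} (A^{-1/2} B A^{-1/2})^{1/2} A^{1/2}`. -/
noncomputable def geomMean {𝕜 : Type*} [RCLike 𝕜] {n : Type*} [Fintype n] [DecidableEq n]
    (A B : Matrix n n 𝕜) : Matrix n n 𝕜 :=
  msqrt A * msqrt ((msqrt A)⁻¹ * B * (msqrt A)⁻¹) * msqrt A

namespace CFC

variable {A : Type*} [CStarAlgebra A] [PartialOrder A] [StarOrderedRing A]

lemma le_abs {a : A} (ha : IsSelfAdjoint a) : a ≤ abs a :=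
  sub_nonneg.mp <| abs_sub_self a ▸ smul_nonneg zero_le_two (negPart_nonneg a)

lemma le_of_mul_self_le_mul_self {a b : A} (ha : IsSelfAdjoint a) (hb : 0 ≤ b)
    (h : a * a ≤ b * b) : a ≤ b := calc
  a ≤ abs a := le_abs ha
  _ = sqrt (a * a) := by rw [abs, ha.star_eq]
  _ ≤ sqrt (b * b) := sqrt_le_sqrt _ _ h
  _ = b := sqrt_mul_self b

end CFC

open scoped MatrixOrder

namespace Matrix

variable {𝕜 m n : Type*} [RCLike 𝕜] [Fintype m] [DecidableEq m] [Fintype n] [DecidableEq n]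

lemma msqrt_eq_sqrt {A : Matrix n n 𝕜} (hA : A.PosSemidef) : msqrt A = CFC.sqrt A := by
  rw [CFC.sqrt_eq_real_sqrt A hA.nonneg, cfcₙ_eq_cfc, hA.1.cfc_eq, msqrt, dif_pos hA]
  rfl

lemma msqrt_mul_msqrt {A : Matrix n n 𝕜} (hA : A.PosSemidef) : msqrt A * msqrt A = A := by
  rw [msqrt_eq_sqrt hA, CFC.sqrt_mul_sqrt_self A hA.nonneg]

lemma PosDef.msqrt {A : Matrix n n 𝕜} (hA : A.PosDef) : (msqrt A).PosDef := by
  rw [msqrt_eq_sqrt hA.posSemidef]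
  exact hA.isStrictlyPositive.sqrt.posDef

lemma IsHermitian.posDef_mul_mul_same {S T : Matrix n n 𝕜} (hS : S.IsHermitian) (hS' : IsUnit S)
    (hT : T.PosDef) : (S * T * S).PosDef := by
  simpa only [star_eq_conjTranspose, hS.eq] using (IsUnit.posDef_star_left_conjugate_iff hS').2 hT

lemma mul_inv_mul_conjTranspose_le_iff {A : Matrix m m 𝕜} {B : Matrix n n 𝕜} (hA : A.PosDef)
    (hB : B.PosDef) (X : Matrix m n 𝕜) : X * B⁻¹ * Xᴴ ≤ A ↔ Xᴴ * A⁻¹ * X ≤ B := by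
  have := hA.isUnit.invertible
  have := hB.isUnit.invertible
  exact (PosDef.fromBlocks₂₂ A X hB).symm.trans (PosDef.fromBlocks₁₁ X B hA)

lemma exists_geomMean_eq {A B : Matrix n n 𝕜} (hA : A.PosDef) (hB : B.PosDef) :
    ∃ S T : Matrix n n 𝕜, S.PosDef ∧ T.PosDef ∧ A = S * S ∧ B = S * (T * T) * S ∧
      geomMean A B = S * T * S := by
  have hS := hA.msqrt
  have hM : ((msqrt A)⁻¹ * B * (msqrt A)⁻¹).PosDef :=
    hS.inv.isHermitian.posDef_mul_mul_same hS.inv.isUnit hB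
  refine ⟨msqrt A, _, hS, hM.msqrt, (msqrt_mul_msqrt hA.posSemidef).symm, ?_, rfl⟩
  rw [msqrt_mul_msqrt hM.posSemidef]
  simp only [Matrix.mul_assoc, mul_nonsing_inv_cancel_left, nonsing_inv_mul, mul_one,
    (isUnit_iff_isUnit_det _).1 hS.isUnit]

lemma geomMean_posDef {A B : Matrix n n 𝕜} (hA : A.PosDef) (hB : B.PosDef) :
    (geomMean A B).PosDef := by
  obtain ⟨S, T, hS, hT, -, -, hG⟩ := exists_geomMean_eq hA hB
  exact hG ▸ hS.isHermitian.posDef_mul_mul_same hS.isUnit hT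

lemma geomMean_mul_inv_mul_geomMean {A B : Matrix n n 𝕜} (hA : A.PosDef) (hB : B.PosDef) :
    geomMean A B * B⁻¹ * geomMean A B = A := by
  obtain ⟨S, T, hS, hT, rfl, rfl, hG⟩ := exists_geomMean_eq hA hB
  have hS' := (isUnit_iff_isUnit_det S).1 hS.isUnit
  have hT' := (isUnit_iff_isUnit_det T).1 hT.isUnit
  rw [hG, mul_inv_rev, mul_inv_rev, mul_inv_rev]
  simp only [Matrix.mul_assoc, nonsing_inv_mul_cancel_left, mul_nonsing_inv_cancel_left, hS', hT']

open scoped Matrix.Norms.L2Operator in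
lemma le_geomMean {A B X : Matrix n n ℂ} (hA : A.PosDef) (hB : B.PosDef) (hX : X.IsHermitian)
    (h : X * B⁻¹ * X ≤ A) : X ≤ geomMean A B := by
  obtain ⟨S, T, hS, hT, rfl, rfl, hG⟩ := exists_geomMean_eq hA hB
  have hS' := (isUnit_iff_isUnit_det S).1 hS.isUnit
  have h' : X * (S * S)⁻¹ * X ≤ S * (T * T) * S := by
    simpa only [hX.eq] using (mul_inv_mul_conjTranspose_le_iff hA hB X).1 (by rwa [hX.eq])
  set Y := S⁻¹ * X * S⁻¹
  have hY : Y.IsHermitian := by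
    simpa only [hS.inv.isHermitian.eq] using isHermitian_conjTranspose_mul_mul S⁻¹ hX
  have hYY : Y * Y ≤ T * T := by
    convert star_left_conjugate_le_conjugate h' S⁻¹ using 1 <;>
    simp only [Y, star_eq_conjTranspose, hS.inv.isHermitian.eq, mul_inv_rev, Matrix.mul_assoc,
      nonsing_inv_mul_cancel_left, mul_nonsing_inv, mul_one, hS']
  have hYT : Y ≤ T := CFC.le_of_mul_self_le_mul_self hY.isSelfAdjoint hT.posSemidef.nonneg hYY
  rw [hG]
  convert star_left_conjugate_le_conjugate hYT S using 1 <;>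
  simp only [Y, star_eq_conjTranspose, hS.isHermitian.eq, Matrix.mul_assoc,
    mul_nonsing_inv_cancel_left, nonsing_inv_mul, mul_one, hS']

end Matrix

/-- The geometric mean `G = A # B` of positive definite matrices is the maximum, in the Löwner
order, among Hermitian `X` with `A ≥ X B⁻¹ X`; in particular `A ≥ G B⁻¹ G`. -/
theorem geomMean_maximal (n : ℕ) (A B : Matrix (Fin n) (Fin n) ℂ)
    (hA : A.PosDef) (hB : B.PosDef) :
    (geomMean A B).IsHermitian ∧ (geomMean A B).PosDef ∧
      (A - geomMean A B * B⁻¹ * geomMean A B).PosSemidef ∧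
      (∀ X : Matrix (Fin n) (Fin n) ℂ, X.IsHermitian →
        (A - X * B⁻¹ * X).PosSemidef → (geomMean A B - X).PosSemidef) := by
  have hG := geomMean_posDef hA hB
  refine ⟨hG.isHermitian, hG, ?_, fun X hX hXA ↦ le_geomMean hA hB hX hXA⟩
  rw [geomMean_mul_inv_mul_geomMean hA hB, sub_self]
  exact .zero
end

section
/- Let M, N be 2×2 complex Hermitian matrices. There exists a real symmetric 2×2 matrix R with M ≤ R ≤ N (Löwner order) if and only if M ≤ N and M ≤ N*, where N* is the entrywise complex conjugate of N. -/
open Matrix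
open scoped ComplexOrder

/-!
A Hermitian `2 × 2` matrix is positive semidefinite iff its trace and determinant are nonnegative
(they are the sum and product of its two eigenvalues), so `!![a, c + y i; c - y i, d] ≥ 0` iff
`a + d ≥ 0` and `y² ≤ ad - c²`. Let `D` be the real part of `N - M` and `μ, ν` the imaginary parts
of the off-diagonal entries of `M, N`. Then `M ≤ N` and `M ≤ N*` say `(ν ∓ μ)² ≤ det D`, that is
`|μ| + |ν| ≤ √(det D)`. Choosing `t ∈ [0, 1]` with `|μ| ≤ t √(det D)` and `|ν| ≤ (1 - t) √(det D)`,
the real symmetric matrix `R = Re M + t D` works: `R - M` and `N - R` have real parts `t D` and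
`(1 - t) D` and off-diagonal imaginary parts `-μ` and `ν`.
-/

theorem Matrix.IsHermitian.posSemidef_iff_trace_nonneg_and_det_nonneg {𝕜 : Type*} [RCLike 𝕜]
    {A : Matrix (Fin 2) (Fin 2) 𝕜} (hA : A.IsHermitian) :
    A.PosSemidef ↔ 0 ≤ A.trace ∧ 0 ≤ A.det := by
  rw [hA.posSemidef_iff_eigenvalues_nonneg, hA.trace_eq_sum_eigenvalues,
    hA.det_eq_prod_eigenvalues, Fin.sum_univ_two, Fin.prod_univ_two, Pi.le_def, Fin.forall_fin_two]
  simp only [← RCLike.ofReal_add, ← RCLike.ofReal_mul, RCLike.ofReal_nonneg, Pi.zero_apply]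
  constructor
  · rintro ⟨h₀, h₁⟩
    exact ⟨add_nonneg h₀ h₁, mul_nonneg h₀ h₁⟩
  · rintro ⟨hsum, hprod⟩
    constructor <;> nlinarith

theorem Matrix.IsHermitian.transpose_eq_map_starRingEnd {α n : Type*} [CommSemiring α]
    [StarRing α] {A : Matrix n n α} (hA : A.IsHermitian) : Aᵀ = A.map (starRingEnd α) := by
  ext i j
  exact (hA.apply j i).symm

def hermitian₂ (a : ℝ) (b : ℂ) (d : ℝ) : Matrix (Fin 2) (Fin 2) ℂ :=
  !![(a : ℂ), b; starRingEnd ℂ b, (d : ℂ)]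

theorem hermitian₂_isHermitian (a : ℝ) (b : ℂ) (d : ℝ) : (hermitian₂ a b d).IsHermitian := by
  ext i j
  fin_cases i <;> fin_cases j <;> simp [hermitian₂]

theorem Matrix.IsHermitian.eq_hermitian₂ {A : Matrix (Fin 2) (Fin 2) ℂ} (hA : A.IsHermitian) :
    A = hermitian₂ (A 0 0).re (A 0 1) (A 1 1).re := by
  ext i j
  fin_cases i <;> fin_cases j
  · exact (Complex.conj_eq_iff_re.mp (hA.apply 0 0)).symm
  · rfl
  · exact (hA.apply 1 0).symm
  · exact (Complex.conj_eq_iff_re.mp (hA.apply 1 1)).symm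

theorem hermitian₂_sub (a a' d d' : ℝ) (b b' : ℂ) :
    hermitian₂ a b d - hermitian₂ a' b' d' = hermitian₂ (a - a') (b - b') (d - d') := by
  ext i j
  fin_cases i <;> fin_cases j <;> simp [hermitian₂]

theorem hermitian₂_map_starRingEnd (a : ℝ) (b : ℂ) (d : ℝ) :
    (hermitian₂ a b d).map (starRingEnd ℂ) = hermitian₂ a (starRingEnd ℂ b) d := by
  ext i j
  fin_cases i <;> fin_cases j <;> simp [hermitian₂]

theorem posSemidef_hermitian₂_iff (a : ℝ) (b : ℂ) (d : ℝ) :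
    (hermitian₂ a b d).PosSemidef ↔ 0 ≤ a + d ∧ Complex.normSq b ≤ a * d := by
  rw [(hermitian₂_isHermitian a b d).posSemidef_iff_trace_nonneg_and_det_nonneg]
  have htrace : (hermitian₂ a b d).trace = ((a + d : ℝ) : ℂ) := by
    simp [hermitian₂, trace_fin_two]
  have hdet : (hermitian₂ a b d).det = ((a * d - Complex.normSq b : ℝ) : ℂ) := by
    simp [hermitian₂, det_fin_two, Complex.mul_conj]
  rw [htrace, hdet, Complex.zero_le_real, Complex.zero_le_real, sub_nonneg]

theorem abs_add_abs_le_sqrt {x y E : ℝ} (hsub : (y - x) ^ 2 ≤ E) (hadd : (y + x) ^ 2 ≤ E) :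
    |x| + |y| ≤ √E := by
  apply Real.le_sqrt_of_sq_le
  rcases abs_cases x with ⟨hx, _⟩ | ⟨hx, _⟩ <;> rcases abs_cases y with ⟨hy, _⟩ | ⟨hy, _⟩ <;>
    rw [hx, hy] <;> nlinarith

theorem exists_le_mul_and_le_one_sub_mul {x y s : ℝ} (hx : 0 ≤ x) (hy : 0 ≤ y) (h : x + y ≤ s) :
    ∃ t : ℝ, 0 ≤ t ∧ t ≤ 1 ∧ x ≤ t * s ∧ y ≤ (1 - t) * s := by
  rcases (hx.trans (le_add_of_nonneg_right hy |>.trans h)).eq_or_lt with hs | hs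
  · exact ⟨0, le_rfl, zero_le_one, by linarith, by linarith⟩
  · refine ⟨x / s, by positivity, (div_le_one hs).mpr (by linarith), ?_, ?_⟩
    · rw [div_mul_cancel₀ x hs.ne']
    · rw [sub_mul, one_mul, div_mul_cancel₀ x hs.ne']
      linarith

theorem exists_sq_le_sq_mul_and_sq_le_one_sub_sq_mul {x y E : ℝ} (hsub : (y - x) ^ 2 ≤ E)
    (hadd : (y + x) ^ 2 ≤ E) :
    ∃ t : ℝ, 0 ≤ t ∧ t ≤ 1 ∧ x ^ 2 ≤ t ^ 2 * E ∧ y ^ 2 ≤ (1 - t) ^ 2 * E := by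
  have hE : 0 ≤ E := (sq_nonneg _).trans hsub
  have sq_le {u z : ℝ} (h : |z| ≤ u * √E) : z ^ 2 ≤ u ^ 2 * E :=
    calc z ^ 2 = |z| ^ 2 := (sq_abs z).symm
      _ ≤ (u * √E) ^ 2 := pow_le_pow_left₀ (abs_nonneg z) h 2
      _ = u ^ 2 * E := by rw [mul_pow, Real.sq_sqrt hE]
  obtain ⟨t, ht₀, ht₁, hx, hy⟩ := exists_le_mul_and_le_one_sub_mul (abs_nonneg x) (abs_nonneg y)
    (abs_add_abs_le_sqrt hsub hadd)
  exact ⟨t, ht₀, ht₁, sq_le hx, sq_le hy⟩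

/-- For `2×2` Hermitian `M, N`, there is a real symmetric `R` with `M ≤ R ≤ N` in the Löwner
order iff `M ≤ N` and `M ≤ N*` (entrywise complex conjugate). -/
theorem exists_real_between_iff (M N : Matrix (Fin 2) (Fin 2) ℂ)
    (hM : M.IsHermitian) (hN : N.IsHermitian) :
    (∃ R : Matrix (Fin 2) (Fin 2) ℂ,
        (∀ i j, (R i j).im = 0) ∧ R.IsSymm ∧
        (R - M).PosSemidef ∧ (N - R).PosSemidef) ↔
      (N - M).PosSemidef ∧ (N.map (starRingEnd ℂ) - M).PosSemidef := by
  constructor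
  · rintro ⟨R, -, hR, hRM, hNR⟩
    refine ⟨sub_add_sub_cancel N R M ▸ hNR.add hRM, ?_⟩
    have hsplit : N.map (starRingEnd ℂ) - M = (N - R)ᵀ + (R - M) := by
      rw [transpose_sub, hN.transpose_eq_map_starRingEnd, hR.eq, sub_add_sub_cancel]
    exact hsplit ▸ hNR.transpose.add hRM
  · obtain ⟨m₀, μ, m₁, rfl⟩ : ∃ a b d, M = hermitian₂ a b d := ⟨_, _, _, hM.eq_hermitian₂⟩
    obtain ⟨n₀, ν, n₁, rfl⟩ : ∃ a b d, N = hermitian₂ a b d := ⟨_, _, _, hN.eq_hermitian₂⟩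
    simp only [hermitian₂_map_starRingEnd, hermitian₂_sub, posSemidef_hermitian₂_iff]
    rintro ⟨⟨htr, hsub⟩, -, hadd⟩
    simp only [Complex.normSq_apply, Complex.sub_re, Complex.sub_im, Complex.conj_re,
      Complex.conj_im] at hsub hadd
    obtain ⟨t, ht₀, ht₁, hμ, hν⟩ := exists_sq_le_sq_mul_and_sq_le_one_sub_sq_mul (x := μ.im)
      (y := ν.im) (E := (n₀ - m₀) * (n₁ - m₁) - (ν.re - μ.re) ^ 2) (by linarith) (by linarith)
    refine ⟨hermitian₂ (m₀ + t * (n₀ - m₀)) ((μ.re + t * (ν.re - μ.re) : ℝ) : ℂ)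
      (m₁ + t * (n₁ - m₁)), ?_, ?_, ?_, ?_⟩
    · intro i j
      fin_cases i <;> fin_cases j <;> simp [hermitian₂]
    · ext i j
      fin_cases i <;> fin_cases j <;> simp [hermitian₂]
    all_goals
      simp only [hermitian₂_sub, posSemidef_hermitian₂_iff, Complex.normSq_apply, Complex.sub_re,
        Complex.sub_im, Complex.ofReal_re, Complex.ofReal_im]
      constructor <;> nlinarith
end

section
/- Let k ∈ (0,1), let |x⟩ be a unit vector in ℂ^{d_A} ⊕ ℂ^{d_B} decomposed as |x⟩ = (√p |y⟩, √(1−p) |z⟩) with unit vectors |y⟩, |z⟩ and p ∈ [0,1]. Define V := k|x⟩⟨x| + (1/k)(I − |x⟩⟨x|), γ_A := k|y⟩⟨y| + (1/k)(I_A − |y⟩⟨y|), γ_B := k|z⟩⟨z| + (1/k)(I_B − |z⟩⟨z|). Then V − γ_A ⊕ γ_B is positive semidefinite; explicitly V − γ_A⊕γ_B = (1/k − k) w w† where w = (√(1−p) |y⟩, −√p |z⟩). -/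
/-!
Since `a P + b (1 - P) = b + (a - b) P`, the difference `V - γ_A ⊕ γ_B` is
`(1/k - k) (y y† ⊕ z z† - x x†)`. With `s = √p` and `t = √(1 - p)`, the vectors
`x = (s y, t z)` and `w = (t y, -s z)` arise from `(y, 0)` and `(0, z)` by the orthogonal matrix
`[[s, t], [t, -s]]`, so `x x† + w w† = y y† ⊕ z z†`.
-/

open Matrix
open scoped ComplexOrder

namespace Matrix

variable {l m n o R : Type*}

theorem vecMulVec_sumElim [Mul R] (a : m → R) (b : n → R) (c : l → R) (d : o → R) :
    vecMulVec (Sum.elim a b) (Sum.elim c d) =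
      fromBlocks (vecMulVec a c) (vecMulVec a d) (vecMulVec b c) (vecMulVec b d) := by
  ext (i | i) (j | j) <;> rfl

theorem vecMulVec_add_vecMulVec_eq_fromBlocks [CommRing R] [StarRing R] {s t : R}
    (hs : star s = s) (ht : star t = t) (hst : s * s + t * t = 1) (y : m → R) (z : n → R) :
    vecMulVec (Sum.elim (fun i => s * y i) (fun j => t * z j))
        (star (Sum.elim (fun i => s * y i) (fun j => t * z j))) +
      vecMulVec (Sum.elim (fun i => t * y i) (fun j => -(s * z j)))
        (star (Sum.elim (fun i => t * y i) (fun j => -(s * z j)))) =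
      fromBlocks (vecMulVec y (star y)) 0 0 (vecMulVec z (star z)) := by
  rw [Function.star_sumElim, Function.star_sumElim, vecMulVec_sumElim, vecMulVec_sumElim,
    fromBlocks_add]
  congr 1 <;> ext i j <;>
    simp only [add_apply, zero_apply, vecMulVec_apply, Pi.star_apply, star_mul', star_neg, hs, ht]
  · linear_combination y i * star (y j) * hst
  · ring
  · ring
  · linear_combination z i * star (z j) * hst

theorem smul_add_smul_one_sub_sub_fromBlocks [CommRing R] [DecidableEq m] [DecidableEq n] (a b : R)
    (P : Matrix (m ⊕ n) (m ⊕ n) R) (Q₁ : Matrix m m R) (Q₂ : Matrix n n R) :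
    (a • P + b • (1 - P)) -
        fromBlocks (a • Q₁ + b • (1 - Q₁)) 0 0 (a • Q₂ + b • (1 - Q₂)) =
      (a - b) • (P - fromBlocks Q₁ 0 0 Q₂) := by
  have hblocks : fromBlocks (a • Q₁ + b • (1 - Q₁)) 0 0 (a • Q₂ + b • (1 - Q₂)) =
      a • fromBlocks Q₁ 0 0 Q₂ + b • (1 - fromBlocks Q₁ 0 0 Q₂) := by
    ext (i | i) (j | j) <;> simp [one_apply]
  rw [hblocks]
  module

end Matrix

theorem absolutely_separable_key_general (dA dB : ℕ) (k p : ℝ)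
    (hk0 : 0 < k) (hk1 : k < 1) (hp0 : 0 ≤ p) (hp1 : p ≤ 1)
    (y : Fin dA → ℂ) (z : Fin dB → ℂ) :
    let x : Fin dA ⊕ Fin dB → ℂ :=
      Sum.elim (fun i => (Real.sqrt p : ℂ) * y i) (fun j => (Real.sqrt (1 - p) : ℂ) * z j)
    let w : Fin dA ⊕ Fin dB → ℂ :=
      Sum.elim (fun i => (Real.sqrt (1 - p) : ℂ) * y i) (fun j => -((Real.sqrt p : ℂ) * z j))
    let V : Matrix (Fin dA ⊕ Fin dB) (Fin dA ⊕ Fin dB) ℂ :=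
      (k : ℂ) • Matrix.vecMulVec x (star x) +
        ((k⁻¹ : ℝ) : ℂ) • (1 - Matrix.vecMulVec x (star x))
    let γA : Matrix (Fin dA) (Fin dA) ℂ :=
      (k : ℂ) • Matrix.vecMulVec y (star y) +
        ((k⁻¹ : ℝ) : ℂ) • (1 - Matrix.vecMulVec y (star y))
    let γB : Matrix (Fin dB) (Fin dB) ℂ :=
      (k : ℂ) • Matrix.vecMulVec z (star z) +
        ((k⁻¹ : ℝ) : ℂ) • (1 - Matrix.vecMulVec z (star z))
    V - Matrix.fromBlocks γA 0 0 γB =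
        ((k⁻¹ - k : ℝ) : ℂ) • Matrix.vecMulVec w (star w) ∧
      (V - Matrix.fromBlocks γA 0 0 γB).PosSemidef := by
  intro x w V γA γB
  have hsq :
      (Real.sqrt p : ℂ) * Real.sqrt p + (Real.sqrt (1 - p) : ℂ) * Real.sqrt (1 - p) = 1 := by
    rw [← Complex.ofReal_mul, ← Complex.ofReal_mul, Real.mul_self_sqrt hp0,
      Real.mul_self_sqrt (sub_nonneg.2 hp1)]
    simp
  have hrot := vecMulVec_add_vecMulVec_eq_fromBlocks (Complex.conj_ofReal _)
    (Complex.conj_ofReal _) hsq y z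
  have heq : V - fromBlocks γA 0 0 γB = ((k⁻¹ - k : ℝ) : ℂ) • vecMulVec w (star w) := by
    rw [smul_add_smul_one_sub_sub_fromBlocks, ← hrot]
    push_cast
    module
  have hgap : (0 : ℂ) ≤ ((k⁻¹ - k : ℝ) : ℂ) := by
    have : k ≤ k⁻¹ := hk1.le.trans ((one_le_inv₀ hk0).2 hk1.le)
    exact_mod_cast sub_nonneg.2 this
  exact ⟨heq, heq ▸ (posSemidef_vecMulVec_self_star w).smul hgap⟩

/-- Key computation for absolute separability of Gaussian states: with
`V = k|x⟩⟨x| + (1/k)(I - |x⟩⟨x|)`, `γ_A = k|y⟩⟨y| + (1/k)(I_A - |y⟩⟨y|)`,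
`γ_B = k|z⟩⟨z| + (1/k)(I_B - |z⟩⟨z|)` and `x = (√p y, √(1-p) z)`, one has
`V - γ_A ⊕ γ_B = (1/k - k) w w†` with `w = (√(1-p) y, -√p z)`, which is positive
semidefinite. -/
theorem absolutely_separable_key (dA dB : ℕ) (k p : ℝ)
    (hk0 : 0 < k) (hk1 : k < 1) (hp0 : 0 ≤ p) (hp1 : p ≤ 1)
    (y : Fin dA → ℂ) (z : Fin dB → ℂ)
    (hy : ∑ i, Complex.normSq (y i) = 1) (hz : ∑ i, Complex.normSq (z i) = 1) :
    let x : Fin dA ⊕ Fin dB → ℂ :=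
      Sum.elim (fun i => (Real.sqrt p : ℂ) * y i) (fun j => (Real.sqrt (1 - p) : ℂ) * z j)
    let w : Fin dA ⊕ Fin dB → ℂ :=
      Sum.elim (fun i => (Real.sqrt (1 - p) : ℂ) * y i) (fun j => -((Real.sqrt p : ℂ) * z j))
    let V : Matrix (Fin dA ⊕ Fin dB) (Fin dA ⊕ Fin dB) ℂ :=
      (k : ℂ) • Matrix.vecMulVec x (star x) +
        ((k⁻¹ : ℝ) : ℂ) • (1 - Matrix.vecMulVec x (star x))
    let γA : Matrix (Fin dA) (Fin dA) ℂ :=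
      (k : ℂ) • Matrix.vecMulVec y (star y) +
        ((k⁻¹ : ℝ) : ℂ) • (1 - Matrix.vecMulVec y (star y))
    let γB : Matrix (Fin dB) (Fin dB) ℂ :=
      (k : ℂ) • Matrix.vecMulVec z (star z) +
        ((k⁻¹ : ℝ) : ℂ) • (1 - Matrix.vecMulVec z (star z))
    V - Matrix.fromBlocks γA 0 0 γB =
        ((k⁻¹ - k : ℝ) : ℂ) • Matrix.vecMulVec w (star w) ∧
      (V - Matrix.fromBlocks γA 0 0 γB).PosSemidef :=
  absolutely_separable_key_general dA dB k p hk0 hk1 hp0 hp1 y z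
end

section
/- Let V be a real positive definite matrix of size 2(m+n) with block decomposition V = [[V_A, X],[Xᵀ, V_B]] (blocks of sizes 2m and 2n), and let Θ_B = I_A ⊕ (⊕ⁿ diag(1,−1)) be the partial-transpose matrix on subsystem B. If V is invariant under partial transposition, i.e., Θ_B V Θ_B = V (equivalently X Θ_B = X and Θ_B V_B Θ_B = V_B), and V_B − iΩ_B is invertible, then the matrix X(V_B − iΩ_B)⁻¹Xᵀ is real (equal to its entrywise complex conjugate X(V_B + iΩ_B)⁻¹Xᵀ). -/
/-!
Conjugation by the involution `Θ_B = 1 ⊗ ζ` fixes `V_B` and negates `Ω_B`, so it carries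
`V_B - iΩ_B` to `V_B + iΩ_B`; inverting, `(V_B + iΩ_B)⁻¹ = Θ_B (V_B - iΩ_B)⁻¹ Θ_B`, and the two
factors `Θ_B` are absorbed by `X` and `Xᵀ`. Entrywise conjugation turns `X (V_B - iΩ_B)⁻¹ Xᵀ`
into `X (V_B + iΩ_B)⁻¹ Xᵀ`, so the first identity says that this matrix is real.
-/

open Matrix
open scoped ComplexOrder Kronecker

/-- The single-mode symplectic form `ω`. -/
def omega1 : Matrix (Fin 2) (Fin 2) ℝ := !![0, 1; -1, 0]
/-- The single-mode partial transposition matrix `ζ = diag(1, -1)`. -/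
def zeta1 : Matrix (Fin 2) (Fin 2) ℝ := !![1, 0; 0, -1]

namespace Matrix

variable {ι κ R S : Type*} [Fintype ι] [CommRing R] [CommRing S]

theorem inv_conj_of_mul_self_eq_one [DecidableEq ι] {T : Matrix ι ι R} (hT : T * T = 1)
    (A : Matrix ι ι R) :
    (T * A * T)⁻¹ = T * A⁻¹ * T := by
  rw [mul_inv_rev, mul_inv_rev, inv_eq_left_inv hT, Matrix.mul_assoc]

theorem mul_inv_conj_mul_transpose [DecidableEq ι] {T : Matrix ι ι R} (hT : T * T = 1)
    (hTt : Tᵀ = T) {X : Matrix κ ι R} (hX : X * T = X) (A : Matrix ι ι R) :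
    X * (T * A * T)⁻¹ * Xᵀ = X * A⁻¹ * Xᵀ := by
  have hXt : T * Xᵀ = Xᵀ := by rw [← hTt, ← transpose_mul, hX]
  calc X * (T * A * T)⁻¹ * Xᵀ = X * T * A⁻¹ * (T * Xᵀ) := by
        rw [inv_conj_of_mul_self_eq_one hT]; simp only [Matrix.mul_assoc]
    _ = X * A⁻¹ * Xᵀ := by rw [hX, hXt]

theorem conj_sub_smul_eq_add_smul {T V W : Matrix ι ι R} (hV : T * V * T = V)
    (hW : T * W * T = -W) (c : R) : T * (V - c • W) * T = V + c • W := by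
  rw [Matrix.mul_sub, Matrix.sub_mul, Matrix.mul_smul, Matrix.smul_mul, hV, hW, smul_neg,
    sub_neg_eq_add]

theorem mul_inv_sub_smul_mul_transpose [DecidableEq ι] {T V W : Matrix ι ι R}
    {X : Matrix κ ι R} (hT : T * T = 1) (hTt : Tᵀ = T) (hX : X * T = X) (hV : T * V * T = V)
    (hW : T * W * T = -W) (c : R) :
    X * (V - c • W)⁻¹ * Xᵀ = X * (V + c • W)⁻¹ * Xᵀ := by
  rw [← conj_sub_smul_eq_add_smul hV hW, mul_inv_conj_mul_transpose hT hTt hX]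

theorem map_mul_inv_sub_smul_mul_transpose [DecidableEq ι] (f : R →+* S)
    {T V W : Matrix ι ι R} {X : Matrix κ ι R} (hT : T * T = 1) (hTt : Tᵀ = T) (hX : X * T = X)
    (hV : T * V * T = V) (hW : T * W * T = -W) (c : S) :
    X.map f * (V.map f - c • W.map f)⁻¹ * (X.map f)ᵀ =
      X.map f * (V.map f + c • W.map f)⁻¹ * (X.map f)ᵀ := by
  have hmap {A B : Matrix ι ι R} (h : A = B) : f.mapMatrix A = f.mapMatrix B := congrArg _ h
  refine mul_inv_sub_smul_mul_transpose (T := T.map f) ?_ ?_ ?_ ?_ ?_ c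
  · simpa using hmap hT
  · rw [← transpose_map, hTt]
  · rw [← Matrix.map_mul, hX]
  · simpa using hmap hV
  · simpa only [map_mul, map_neg, RingHom.mapMatrix_apply] using hmap hW

theorem map_star_inv [DecidableEq ι] [StarRing R] (A : Matrix ι ι R) :
    A⁻¹.map star = (A.map star)⁻¹ := by
  have h (B : Matrix ι ι R) : B.map star = Bᴴᵀ := by
    rw [conjTranspose, transpose_map, transpose_transpose]
  rw [h, h, conjTranspose_nonsing_inv, transpose_nonsing_inv]

theorem one_kronecker_mul_one_kronecker [DecidableEq ι] [Fintype κ] (A B : Matrix κ κ R) :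
    ((1 : Matrix ι ι R) ⊗ₖ A) * ((1 : Matrix ι ι R) ⊗ₖ B) = (1 : Matrix ι ι R) ⊗ₖ (A * B) := by
  rw [← mul_kronecker_mul, one_mul]

end Matrix

theorem zeta1_mul_zeta1 : zeta1 * zeta1 = 1 := by
  ext i j; fin_cases i <;> fin_cases j <;> simp [zeta1]

theorem transpose_zeta1 : zeta1ᵀ = zeta1 := by
  ext i j; fin_cases i <;> fin_cases j <;> simp [zeta1]

theorem zeta1_mul_omega1_mul_zeta1 : zeta1 * omega1 * zeta1 = -omega1 := by
  ext i j; fin_cases i <;> fin_cases j <;> simp [zeta1, omega1]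

section PartialTranspose

variable {ι : Type*} [DecidableEq ι]

theorem one_kronecker_zeta1_mul_self [Fintype ι] :
    ((1 : Matrix ι ι ℝ) ⊗ₖ zeta1) * ((1 : Matrix ι ι ℝ) ⊗ₖ zeta1) = 1 := by
  rw [one_kronecker_mul_one_kronecker, zeta1_mul_zeta1, one_kronecker_one]

theorem transpose_one_kronecker_zeta1 :
    ((1 : Matrix ι ι ℝ) ⊗ₖ zeta1)ᵀ = (1 : Matrix ι ι ℝ) ⊗ₖ zeta1 := by
  rw [← kroneckerMap_transpose, transpose_zeta1, transpose_one]

theorem one_kronecker_zeta1_conj_one_kronecker_omega1 [Fintype ι] :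
    ((1 : Matrix ι ι ℝ) ⊗ₖ zeta1) * ((1 : Matrix ι ι ℝ) ⊗ₖ omega1) *
      ((1 : Matrix ι ι ℝ) ⊗ₖ zeta1) = -((1 : Matrix ι ι ℝ) ⊗ₖ omega1) := by
  rw [one_kronecker_mul_one_kronecker, one_kronecker_mul_one_kronecker,
    zeta1_mul_omega1_mul_zeta1]
  ext; simp

end PartialTranspose

section Complexification

open Complex

variable {ι κ : Type*}

theorem map_star_ofReal_sub_I_smul (V W : Matrix ι ι ℝ) :
    (V.map ofReal - I • W.map ofReal).map star = V.map ofReal + I • W.map ofReal := by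
  ext; simp

theorem map_star_ofReal_mul_inv_mul_transpose [Fintype ι] [DecidableEq ι] (X : Matrix κ ι ℝ)
    (A : Matrix ι ι ℂ) :
    (X.map ofReal * A⁻¹ * (X.map ofReal)ᵀ).map star =
      X.map ofReal * (A.map star)⁻¹ * (X.map ofReal)ᵀ := by
  have hX : (X.map ofReal).map (starRingEnd ℂ) = X.map ofReal := by ext; simp
  have hXt : (X.map ofReal)ᵀ.map (starRingEnd ℂ) = (X.map ofReal)ᵀ := by ext; simp
  change (_ : Matrix κ κ ℂ).map (starRingEnd ℂ) = _
  rw [Matrix.map_mul, Matrix.map_mul, hX, hXt]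
  exact congrArg (X.map ofReal * · * (X.map ofReal)ᵀ) (map_star_inv A)

theorem im_eq_zero_of_map_star_eq {M : Matrix κ ι ℂ} (h : M.map star = M) (i : κ) (j : ι) :
    (M i j).im = 0 :=
  conj_eq_iff_im.mp (congrFun (congrFun h i) j)

end Complexification

theorem invariant_partial_transpose_real_general (m n : ℕ)
    (X : Matrix (Fin (2 * m)) (Fin n × Fin 2) ℝ)
    (VB : Matrix (Fin n × Fin 2) (Fin n × Fin 2) ℝ)
    (hX : X * ((1 : Matrix (Fin n) (Fin n) ℝ) ⊗ₖ zeta1) = X)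
    (hV : ((1 : Matrix (Fin n) (Fin n) ℝ) ⊗ₖ zeta1) * VB *
        ((1 : Matrix (Fin n) (Fin n) ℝ) ⊗ₖ zeta1) = VB) :
    X.map Complex.ofReal *
        (VB.map Complex.ofReal -
          Complex.I • ((1 : Matrix (Fin n) (Fin n) ℝ) ⊗ₖ omega1).map Complex.ofReal)⁻¹ *
        (X.map Complex.ofReal)ᵀ =
      X.map Complex.ofReal *
        (VB.map Complex.ofReal +
          Complex.I • ((1 : Matrix (Fin n) (Fin n) ℝ) ⊗ₖ omega1).map Complex.ofReal)⁻¹ *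
        (X.map Complex.ofReal)ᵀ ∧
      ∀ i j, ((X.map Complex.ofReal *
          (VB.map Complex.ofReal -
            Complex.I • ((1 : Matrix (Fin n) (Fin n) ℝ) ⊗ₖ omega1).map Complex.ofReal)⁻¹ *
          (X.map Complex.ofReal)ᵀ) i j).im = 0 := by
  have hsym := map_mul_inv_sub_smul_mul_transpose Complex.ofRealHom
    one_kronecker_zeta1_mul_self transpose_one_kronecker_zeta1 hX hV
    one_kronecker_zeta1_conj_one_kronecker_omega1 Complex.I
  refine ⟨hsym, im_eq_zero_of_map_star_eq ?_⟩
  rw [map_star_ofReal_mul_inv_mul_transpose, map_star_ofReal_sub_I_smul]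
  exact hsym.symm

/-- If a block `X`, `V_B` of a covariance matrix is invariant under partial transposition on
`B` (`X Θ_B = X`, `Θ_B V_B Θ_B = V_B`), and `V_B - iΩ_B` is invertible, then
`X (V_B - iΩ_B)⁻¹ Xᵀ = X (V_B + iΩ_B)⁻¹ Xᵀ`, so this matrix is real. -/
theorem invariant_partial_transpose_real (m n : ℕ)
    (X : Matrix (Fin (2 * m)) (Fin n × Fin 2) ℝ)
    (VB : Matrix (Fin n × Fin 2) (Fin n × Fin 2) ℝ) (hVB : VB.IsSymm)
    (hX : X * ((1 : Matrix (Fin n) (Fin n) ℝ) ⊗ₖ zeta1) = X)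
    (hV : ((1 : Matrix (Fin n) (Fin n) ℝ) ⊗ₖ zeta1) * VB *
        ((1 : Matrix (Fin n) (Fin n) ℝ) ⊗ₖ zeta1) = VB)
    (hinv : IsUnit (VB.map Complex.ofReal -
        Complex.I • ((1 : Matrix (Fin n) (Fin n) ℝ) ⊗ₖ omega1).map Complex.ofReal).det) :
    X.map Complex.ofReal *
        (VB.map Complex.ofReal -
          Complex.I • ((1 : Matrix (Fin n) (Fin n) ℝ) ⊗ₖ omega1).map Complex.ofReal)⁻¹ *
        (X.map Complex.ofReal)ᵀ =
      X.map Complex.ofReal *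
        (VB.map Complex.ofReal +
          Complex.I • ((1 : Matrix (Fin n) (Fin n) ℝ) ⊗ₖ omega1).map Complex.ofReal)⁻¹ *
        (X.map Complex.ofReal)ᵀ ∧
      ∀ i j, ((X.map Complex.ofReal *
          (VB.map Complex.ofReal -
            Complex.I • ((1 : Matrix (Fin n) (Fin n) ℝ) ⊗ₖ omega1).map Complex.ofReal)⁻¹ *
          (X.map Complex.ofReal)ᵀ) i j).im = 0 :=
  invariant_partial_transpose_real_general m n X VB hX hV
end
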